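/- arXiv:1710.06682 — 2 statements merged into one kernel-verified Lean document; each statement's English description precedes it below -/
import Mathlib

section
/- Let the triangulation of the octahedron-like patch be 𝒯 = {T_{jkℓ}} with T_{jkℓ} = conv{0, (-1)^j e₁, (-1)^k e₂, (-1)^ℓ e₃} for (j,k,ℓ) ∈ {1,2}³, and let q be the piecewise constant function with q = 1 on T_{11ℓ} and T_{22ℓ} (ℓ=1,2) and q = 0 on the other four tetrahedra. Then for every piecewise affine vector field v_h = (v₁, v₂, v₃) whose first two components are continuous and vanish on ∂Ω and whose third component is affine on each tetrahedron with matching integral means on interior faces and vanishing integral mean on boundary faces, one has ∫_Ω q div_h v_h dx = 0. -/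
open MeasureTheory Set

noncomputable section

/-- Sign `(-1)^j` encoded by a Boolean. -/
def sgnB (b : Bool) : ℝ := if b then 1 else -1

/-- The tetrahedron `T_σ = conv{0, ±e₁, ±e₂, ±e₃}` of the octahedron patch,
with signs given by `σ`. -/
def octT (σ : Fin 3 → Bool) : Set (Fin 3 → ℝ) :=
  convexHull ℝ ({0, sgnB (σ 0) • (Pi.single 0 1 : Fin 3 → ℝ),
    sgnB (σ 1) • (Pi.single 1 1 : Fin 3 → ℝ),
    sgnB (σ 2) • (Pi.single 2 1 : Fin 3 → ℝ)} : Set (Fin 3 → ℝ))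

/-- The open octahedron `Ω = int (⋃ T_σ)`. -/
def octΩ : Set (Fin 3 → ℝ) := interior (⋃ σ, octT σ)


lemma sgnB_sq (b : Bool) : sgnB b * sgnB b = 1 := by cases b <;> norm_num [sgnB]
lemma sgnB_abs (b : Bool) : |sgnB b| = 1 := by cases b <;> norm_num [sgnB]

/-- description of the solid tetrahedron. -/
def tet (t : Fin 3 → ℝ) : Set (Fin 3 → ℝ) :=
  {x | (∀ i, 0 ≤ t i * x i) ∧ ∑ i, t i * x i ≤ 1}

lemma convex_tet (t : Fin 3 → ℝ) : Convex ℝ (tet t) := by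
  intro x hx y hy a b ha hb hab
  obtain ⟨hx1, hx2⟩ := hx
  obtain ⟨hy1, hy2⟩ := hy
  constructor
  · intro i
    have : t i * (a • x + b • y) i = a * (t i * x i) + b * (t i * y i) := by
      simp [Pi.add_apply, Pi.smul_apply, smul_eq_mul]; ring
    rw [this]
    exact add_nonneg (mul_nonneg ha (hx1 i)) (mul_nonneg hb (hy1 i))
  · have : ∑ i, t i * (a • x + b • y) i
        = a * ∑ i, t i * x i + b * ∑ i, t i * y i := by
      rw [Finset.mul_sum, Finset.mul_sum, ← Finset.sum_add_distrib]
      exact Finset.sum_congr rfl fun i _ => by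
        simp [Pi.add_apply, Pi.smul_apply, smul_eq_mul]; ring
    rw [this]
    calc a * ∑ i, t i * x i + b * ∑ i, t i * y i ≤ a * 1 + b * 1 := by gcongr
    _ = 1 := by linarith

lemma hull4_eq (t : Fin 3 → ℝ) (ht : ∀ i, t i * t i = 1) :
    convexHull ℝ ({0, t 0 • (Pi.single 0 1 : Fin 3 → ℝ),
      t 1 • (Pi.single 1 1 : Fin 3 → ℝ),
      t 2 • (Pi.single 2 1 : Fin 3 → ℝ)} : Set (Fin 3 → ℝ)) = tet t := by
  apply Subset.antisymm
  · apply convexHull_min _ (convex_tet t)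
    rintro x (rfl | rfl | rfl | rfl)
    · exact ⟨fun i => by simp, by simp⟩
    · refine ⟨fun i => ?_, ?_⟩
      · fin_cases i <;> simp [Pi.single_apply, ht 0]
      · simp [Fin.sum_univ_three, Pi.single_apply, ht 0]
    · refine ⟨fun i => ?_, ?_⟩
      · fin_cases i <;> simp [Pi.single_apply, ht 1]
      · simp [Fin.sum_univ_three, Pi.single_apply, ht 1]
    · refine ⟨fun i => ?_, ?_⟩
      · fin_cases i <;> simp [Pi.single_apply, ht 2]
      · simp [Fin.sum_univ_three, Pi.single_apply, ht 2]
  · rintro x ⟨h0, h1⟩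
    have hx : x = Finset.centerMass (Finset.univ : Finset (Fin 4))
        ![1 - ∑ i, t i * x i, t 0 * x 0, t 1 * x 1, t 2 * x 2]
        (![0, t 0 • (Pi.single 0 1 : Fin 3 → ℝ), t 1 • (Pi.single 1 1 : Fin 3 → ℝ),
          t 2 • (Pi.single 2 1 : Fin 3 → ℝ)] : Fin 4 → (Fin 3 → ℝ)) := by
      rw [Finset.centerMass]
      have hsum : ∑ i : Fin 4, (![1 - ∑ i, t i * x i, t 0 * x 0, t 1 * x 1, t 2 * x 2]) i
          = 1 := by
        simp [Fin.sum_univ_four, Fin.sum_univ_three]; ring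
      rw [hsum, inv_one, one_smul]
      funext j
      have : (∑ i : Fin 4, (![1 - ∑ i, t i * x i, t 0 * x 0, t 1 * x 1, t 2 * x 2]) i •
          (![0, t 0 • (Pi.single 0 1 : Fin 3 → ℝ), t 1 • (Pi.single 1 1 : Fin 3 → ℝ),
            t 2 • (Pi.single 2 1 : Fin 3 → ℝ)] : Fin 4 → (Fin 3 → ℝ)) i) j
          = ∑ i : Fin 4, (![1 - ∑ i, t i * x i, t 0 * x 0, t 1 * x 1, t 2 * x 2]) i *
            (![0, t 0 • (Pi.single 0 1 : Fin 3 → ℝ), t 1 • (Pi.single 1 1 : Fin 3 → ℝ),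
              t 2 • (Pi.single 2 1 : Fin 3 → ℝ)] : Fin 4 → (Fin 3 → ℝ)) i j := by
        simp [Finset.sum_apply]
      rw [this, Fin.sum_univ_four]
      fin_cases j <;>
        simp [Pi.single_apply, Matrix.vecHead, Matrix.vecTail] <;>
        [linear_combination (-(x 0)) * ht 0; linear_combination (-(x 1)) * ht 1;
          linear_combination (-(x 2)) * ht 2]
    rw [hx]
    refine Finset.centerMass_mem_convexHull _ ?_ ?_ ?_
    · intro i _
      fin_cases i
      · simpa using sub_nonneg.2 h1
      · exact h0 0
      · exact h0 1
      · exact h0 2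
    · have : ∑ i : Fin 4, (![1 - ∑ i, t i * x i, t 0 * x 0, t 1 * x 1, t 2 * x 2]) i
          = 1 := by
        simp [Fin.sum_univ_four, Fin.sum_univ_three]; ring
      rw [this]; norm_num
    · intro i _
      fin_cases i <;> simp [mem_insert_iff]

lemma octT_eq (σ : Fin 3 → Bool) : octT σ = tet (fun i => sgnB (σ i)) := by
  unfold octT
  exact hull4_eq (fun i => sgnB (σ i)) (fun i => sgnB_sq (σ i))

def l1 (x : Fin 3 → ℝ) : ℝ := ∑ i, |x i|

lemma continuous_l1 : Continuous l1 :=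
  continuous_finset_sum _ fun i _ => (continuous_apply i).abs

lemma l1_nonneg (x : Fin 3 → ℝ) : 0 ≤ l1 x :=
  Finset.sum_nonneg fun i _ => abs_nonneg _

lemma abs_one_of_sq {t : ℝ} (ht : t * t = 1) : |t| = 1 := by
  nlinarith [abs_nonneg t, abs_mul_abs_self t]

lemma abs_eq_of_sign {t x : ℝ} (ht : t * t = 1) (hx : 0 ≤ t * x) : |x| = t * x := by
  rw [← abs_of_nonneg hx, abs_mul, abs_one_of_sq ht, one_mul]

lemma l1_eq_of_tet {t : Fin 3 → ℝ} (ht : ∀ i, t i * t i = 1) {x : Fin 3 → ℝ}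
    (hx : ∀ i, 0 ≤ t i * x i) : l1 x = ∑ i, t i * x i :=
  Finset.sum_congr rfl fun i _ => abs_eq_of_sign (ht i) (hx i)

lemma union_octT : (⋃ σ, octT σ) = {x | l1 x ≤ 1} := by
  ext x
  simp only [mem_iUnion, mem_setOf_eq]
  constructor
  · rintro ⟨σ, hx⟩
    rw [octT_eq] at hx
    obtain ⟨h0, h1⟩ := hx
    rw [l1_eq_of_tet (fun i => sgnB_sq (σ i)) h0]
    exact h1
  · intro hx
    refine ⟨fun i => decide (0 ≤ x i), ?_⟩
    rw [octT_eq]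
    have habs : ∀ i, sgnB (decide (0 ≤ x i)) * x i = |x i| := by
      intro i
      by_cases h : 0 ≤ x i
      · simp [h, sgnB, abs_of_nonneg h]
      · simp [h, sgnB, abs_of_neg (lt_of_not_ge h)]
    constructor
    · intro i; rw [habs i]; exact abs_nonneg _
    · calc ∑ i, sgnB (decide (0 ≤ x i)) * x i = ∑ i, |x i| :=
            Finset.sum_congr rfl fun i _ => habs i
        _ ≤ 1 := hx

lemma l1_smul (c : ℝ) (x : Fin 3 → ℝ) : l1 (c • x) = |c| * l1 x := by
  unfold l1
  rw [Finset.mul_sum]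
  exact Finset.sum_congr rfl fun i _ => by
    simp [Pi.smul_apply, smul_eq_mul, abs_mul]

lemma norm_le_l1 (x : Fin 3 → ℝ) : ‖x‖ ≤ l1 x := by
  rw [pi_norm_le_iff_of_nonneg (l1_nonneg x)]
  intro i
  rw [Real.norm_eq_abs]
  exact Finset.single_le_sum (fun j _ => abs_nonneg (x j)) (Finset.mem_univ i)

lemma interior_l1ball : interior {x : Fin 3 → ℝ | l1 x ≤ 1} = {x | l1 x < 1} := by
  apply Subset.antisymm
  · intro x hx
    have hle : l1 x ≤ 1 := (interior_subset hx : x ∈ {x | l1 x ≤ 1})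
    rcases lt_or_eq_of_le hle with h | h
    · exact h
    exfalso
    rw [mem_interior_iff_mem_nhds, Metric.mem_nhds_iff] at hx
    obtain ⟨ε, hε, hball⟩ := hx
    set δ : ℝ := min (ε / 2) 1 with hδdef
    have hδpos : 0 < δ := lt_min (by linarith) one_pos
    have hy : (1 + δ) • x ∈ Metric.ball x ε := by
      rw [Metric.mem_ball, dist_eq_norm]
      have : (1 + δ) • x - x = δ • x := by
        rw [add_smul, one_smul]; abel
      rw [this, norm_smul, Real.norm_eq_abs, abs_of_pos hδpos]
      have h1 : ‖x‖ ≤ 1 := le_trans (norm_le_l1 x) (le_of_eq h)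
      calc δ * ‖x‖ ≤ δ * 1 := by gcongr
        _ = δ := mul_one δ
        _ ≤ ε / 2 := min_le_left _ _
        _ < ε := by linarith
    have := hball hy
    rw [mem_setOf_eq, l1_smul] at this
    rw [abs_of_pos (by linarith : (0:ℝ) < 1 + δ)] at this
    rw [← h] at this
    nlinarith [l1_nonneg x]
  · exact interior_maximal (fun x (hx : l1 x < 1) => show l1 x ≤ 1 from le_of_lt hx)
      (isOpen_lt continuous_l1 continuous_const)

lemma closure_interior_l1ball :
    closure (interior {x : Fin 3 → ℝ | l1 x ≤ 1}) = {x | l1 x ≤ 1} := by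
  apply Subset.antisymm
  · refine closure_minimal interior_subset (isClosed_le continuous_l1 continuous_const)
  · intro x hx
    have hx' : l1 x ≤ 1 := hx
    rw [interior_l1ball]
    rcases lt_or_eq_of_le hx' with h | h
    · exact subset_closure (show l1 x < 1 from h)
    rw [Metric.mem_closure_iff]
    intro ε hε
    set δ : ℝ := min (ε / 2) (1 / 2) with hδdef
    have hδpos : 0 < δ := lt_min (by linarith) (by norm_num)
    have hδlt : δ < 1 := lt_of_le_of_lt (min_le_right _ _) (by norm_num)
    refine ⟨(1 - δ) • x, ?_, ?_⟩
    · rw [mem_setOf_eq, l1_smul, abs_of_pos (by linarith), ← h]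
      nlinarith [l1_nonneg x, h]
    · rw [dist_eq_norm]
      have : x - (1 - δ) • x = δ • x := by
        rw [sub_smul, one_smul]; abel
      rw [this, norm_smul, Real.norm_eq_abs, abs_of_pos hδpos]
      have h1 : ‖x‖ ≤ 1 := le_trans (norm_le_l1 x) (le_of_eq h)
      calc δ * ‖x‖ ≤ δ * 1 := by gcongr
        _ = δ := mul_one δ
        _ ≤ ε / 2 := min_le_left _ _
        _ < ε := by linarith

lemma frontier_octΩ : frontier octΩ = {x | l1 x = 1} := by
  unfold octΩ
  rw [union_octT, frontier, interior_interior, closure_interior_l1ball, interior_l1ball]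
  ext x
  simp only [mem_diff, mem_setOf_eq, not_lt]
  constructor
  · rintro ⟨h1, h2⟩; linarith
  · intro h; exact ⟨le_of_eq h, ge_of_eq h⟩

/-- description of a boundary face. -/
def faceT (t : Fin 3 → ℝ) : Set (Fin 3 → ℝ) :=
  {x | (∀ i, 0 ≤ t i * x i) ∧ ∑ i, t i * x i = 1}

lemma octT_inter_frontier (σ : Fin 3 → Bool) :
    octT σ ∩ frontier octΩ = faceT (fun i => sgnB (σ i)) := by
  rw [octT_eq, frontier_octΩ]
  ext x
  simp only [mem_inter_iff, mem_setOf_eq, tet, faceT]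
  constructor
  · rintro ⟨⟨h0, h1⟩, he⟩
    refine ⟨h0, ?_⟩
    rw [← l1_eq_of_tet (fun i => sgnB_sq (σ i)) h0]
    exact he
  · rintro ⟨h0, h1⟩
    exact ⟨⟨h0, le_of_eq h1⟩,
      by rw [l1_eq_of_tet (fun i => sgnB_sq (σ i)) h0]; exact h1⟩

lemma zero_mem_octT (σ : Fin 3 → Bool) : (0 : Fin 3 → ℝ) ∈ octT σ := by
  rw [octT_eq]
  exact ⟨fun i => by simp, by simp⟩

lemma vertex_mem_face (σ : Fin 3 → Bool) (j : Fin 3) :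
    sgnB (σ j) • (Pi.single j 1 : Fin 3 → ℝ) ∈ octT σ ∩ frontier octΩ := by
  rw [octT_inter_frontier]
  constructor
  · intro i
    by_cases h : i = j
    · subst h; simp [Pi.single_eq_same, sgnB_sq]
    · simp [Pi.single_eq_of_ne h]
  · rw [Fin.sum_univ_three]
    fin_cases j <;> simp [Pi.single_apply, sgnB_sq]

lemma mem_faceT_iff {t : Fin 3 → ℝ} {x : Fin 3 → ℝ} :
    x ∈ faceT t ↔ (0 ≤ t 0 * x 0 ∧ 0 ≤ t 1 * x 1 ∧ 0 ≤ t 2 * x 2) ∧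
      t 0 * x 0 + t 1 * x 1 + t 2 * x 2 = 1 := by
  unfold faceT
  rw [mem_setOf_eq, Fin.sum_univ_three]
  constructor
  · rintro ⟨h0, h1⟩; exact ⟨⟨h0 0, h0 1, h0 2⟩, h1⟩
  · rintro ⟨⟨h0, h1, h2⟩, h3⟩
    refine ⟨fun i => ?_, h3⟩
    fin_cases i <;> assumption

lemma isClosed_faceT (t : Fin 3 → ℝ) : IsClosed (faceT t) := by
  have : faceT t = (⋂ i, {x : Fin 3 → ℝ | 0 ≤ t i * x i}) ∩
      {x | ∑ i, t i * x i = 1} := by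
    ext x; simp [faceT, mem_iInter]
  rw [this]
  exact IsClosed.inter
    (isClosed_iInter fun i => isClosed_le continuous_const
      (continuous_const.mul (continuous_apply i)))
    (isClosed_eq (continuous_finset_sum _ fun i _ =>
      continuous_const.mul (continuous_apply i)) continuous_const)

lemma faceT_subset_ball {t : Fin 3 → ℝ} (ht : ∀ i, t i * t i = 1) :
    faceT t ⊆ Metric.closedBall 0 1 := by
  intro x hx
  obtain ⟨h0, h1⟩ := hx
  rw [mem_closedBall_zero_iff]
  rw [pi_norm_le_iff_of_nonneg zero_le_one]
  intro i
  rw [Real.norm_eq_abs, abs_eq_of_sign (ht i) (h0 i)]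
  calc t i * x i ≤ ∑ j, t j * x j :=
        Finset.single_le_sum (fun j _ => h0 j) (Finset.mem_univ i)
    _ = 1 := h1

lemma isCompact_faceT {t : Fin 3 → ℝ} (ht : ∀ i, t i * t i = 1) :
    IsCompact (faceT t) :=
  Metric.isCompact_of_isClosed_isBounded (isClosed_faceT t)
    (Metric.isBounded_closedBall.subset (faceT_subset_ball ht))

lemma integrableOn_hausdorff_of_continuous {s : Set (Fin 3 → ℝ)}
    (hs : MeasurableSet s) (hc : IsCompact s) (hfin : μH[2] s ≠ ⊤)
    {f : (Fin 3 → ℝ) → ℝ} (hf : Continuous f) :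
    IntegrableOn f s (μH[2] : Measure (Fin 3 → ℝ)) := by
  obtain ⟨C, hC⟩ := hc.exists_bound_of_continuousOn hf.continuousOn
  haveI : IsFiniteMeasure ((μH[2] : Measure (Fin 3 → ℝ)).restrict s) :=
    ⟨by rw [Measure.restrict_apply_univ]; exact lt_top_iff_ne_top.2 hfin⟩
  exact ⟨hf.aestronglyMeasurable,
    HasFiniteIntegral.of_bounded ((ae_restrict_iff' hs).2 (ae_of_all _ hC))⟩

lemma dist_unit_mul {c : ℝ} (a b : ℝ) (hc : |c| = 1) : dist (c * a) (c * b) = dist a b := by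
  rw [Real.dist_eq, Real.dist_eq, ← mul_sub, abs_mul, hc, one_mul]

/-- the `3`-cycle signed permutation of a face. -/
def cyc (t : Fin 3 → ℝ) (ht : ∀ i, t i * t i = 1) : (Fin 3 → ℝ) ≃ᵢ (Fin 3 → ℝ) where
  toFun x := ![t 2 * t 0 * x 2, t 0 * t 1 * x 0, t 1 * t 2 * x 1]
  invFun y := ![t 0 * t 1 * y 1, t 1 * t 2 * y 2, t 2 * t 0 * y 0]
  left_inv := by
    intro x
    funext i
    fin_cases i <;> simp <;>
      [linear_combination (t 1 * t 1 * x 0) * ht 0 + x 0 * ht 1;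
       linear_combination (t 2 * t 2 * x 1) * ht 1 + x 1 * ht 2;
       linear_combination (t 0 * t 0 * x 2) * ht 2 + x 2 * ht 0]
  right_inv := by
    intro x
    funext i
    fin_cases i <;> simp <;>
      [linear_combination (t 0 * t 0 * x 0) * ht 2 + x 0 * ht 0;
       linear_combination (t 1 * t 1 * x 1) * ht 0 + x 1 * ht 1;
       linear_combination (t 2 * t 2 * x 2) * ht 1 + x 2 * ht 2]
  isometry_toFun := by
    have h01 : |t 0 * t 1| = 1 := by
      rw [abs_mul, abs_one_of_sq (ht 0), abs_one_of_sq (ht 1), one_mul]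
    have h12 : |t 1 * t 2| = 1 := by
      rw [abs_mul, abs_one_of_sq (ht 1), abs_one_of_sq (ht 2), one_mul]
    have h20 : |t 2 * t 0| = 1 := by
      rw [abs_mul, abs_one_of_sq (ht 2), abs_one_of_sq (ht 0), one_mul]
    apply Isometry.of_dist_eq
    intro x y
    apply le_antisymm
    · apply (dist_pi_le_iff dist_nonneg).2
      intro i
      fin_cases i <;> simp
      · rw [dist_unit_mul _ _ h20]; exact dist_le_pi_dist x y 2
      · rw [dist_unit_mul _ _ h01]; exact dist_le_pi_dist x y 0
      · rw [dist_unit_mul _ _ h12]; exact dist_le_pi_dist x y 1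
    · apply (dist_pi_le_iff dist_nonneg).2
      intro i
      fin_cases i
      · calc dist (x 0) (y 0) = dist (t 0 * t 1 * x 0) (t 0 * t 1 * y 0) :=
              (dist_unit_mul _ _ h01).symm
          _ ≤ _ := by
              have h := dist_le_pi_dist
                (![t 2 * t 0 * x 2, t 0 * t 1 * x 0, t 1 * t 2 * x 1])
                (![t 2 * t 0 * y 2, t 0 * t 1 * y 0, t 1 * t 2 * y 1]) 1
              simpa using h
      · calc dist (x 1) (y 1) = dist (t 1 * t 2 * x 1) (t 1 * t 2 * y 1) :=
              (dist_unit_mul _ _ h12).symm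
          _ ≤ _ := by
              have h := dist_le_pi_dist
                (![t 2 * t 0 * x 2, t 0 * t 1 * x 0, t 1 * t 2 * x 1])
                (![t 2 * t 0 * y 2, t 0 * t 1 * y 0, t 1 * t 2 * y 1]) 2
              simpa using h
      · calc dist (x 2) (y 2) = dist (t 2 * t 0 * x 2) (t 2 * t 0 * y 2) :=
              (dist_unit_mul _ _ h20).symm
          _ ≤ _ := by
              have h := dist_le_pi_dist
                (![t 2 * t 0 * x 2, t 0 * t 1 * x 0, t 1 * t 2 * x 1])
                (![t 2 * t 0 * y 2, t 0 * t 1 * y 0, t 1 * t 2 * y 1]) 0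
              simpa using h

lemma cyc_apply_zero (t : Fin 3 → ℝ) (ht : ∀ i, t i * t i = 1) (x : Fin 3 → ℝ) :
    cyc t ht x 0 = t 2 * t 0 * x 2 := rfl

lemma cyc_apply_one (t : Fin 3 → ℝ) (ht : ∀ i, t i * t i = 1) (x : Fin 3 → ℝ) :
    cyc t ht x 1 = t 0 * t 1 * x 0 := rfl

lemma cyc_apply_two (t : Fin 3 → ℝ) (ht : ∀ i, t i * t i = 1) (x : Fin 3 → ℝ) :
    cyc t ht x 2 = t 1 * t 2 * x 1 := rfl

lemma cyc_preimage_faceT (t : Fin 3 → ℝ) (ht : ∀ i, t i * t i = 1) :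
    (cyc t ht) ⁻¹' (faceT t) = faceT t := by
  ext x
  rw [mem_preimage, mem_faceT_iff, mem_faceT_iff,
    cyc_apply_zero, cyc_apply_one, cyc_apply_two]
  have e0 : t 0 * (t 2 * t 0 * x 2) = t 2 * x 2 := by
    linear_combination (t 2 * x 2) * ht 0
  have e1 : t 1 * (t 0 * t 1 * x 0) = t 0 * x 0 := by
    linear_combination (t 0 * x 0) * ht 1
  have e2 : t 2 * (t 1 * t 2 * x 1) = t 1 * x 1 := by
    linear_combination (t 1 * x 1) * ht 2
  rw [e0, e1, e2]
  constructor
  · rintro ⟨⟨a, b, c⟩, d⟩; exact ⟨⟨b, c, a⟩, by linarith⟩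
  · rintro ⟨⟨a, b, c⟩, d⟩; exact ⟨⟨c, a, b⟩, by linarith⟩

lemma cyc_sum_apply (t : Fin 3 → ℝ) (ht : ∀ i, t i * t i = 1)
    (A : (Fin 3 → ℝ) →ᵃ[ℝ] ℝ) {x : Fin 3 → ℝ} (hx : x ∈ faceT t) :
    A x + A (cyc t ht x) + A (cyc t ht (cyc t ht x)) = 3 * A (fun i => t i / 3) := by
  have hsum : t 0 * x 0 + t 1 * x 1 + t 2 * x 2 = 1 := (mem_faceT_iff.1 hx).2
  have hdec : ∀ z : Fin 3 → ℝ, A z = A.linear z + A 0 := by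
    intro z
    conv_lhs => rw [A.decomp]
    simp
  have hxsum : x + cyc t ht x + cyc t ht (cyc t ht x) = (3:ℝ) • (fun i => t i / 3) := by
    funext i
    simp only [Pi.add_apply, Pi.smul_apply, smul_eq_mul]
    fin_cases i
    · show x 0 + t 2 * t 0 * x 2 + t 2 * t 0 * (t 1 * t 2 * x 1) = 3 * (t 0 / 3)
      linear_combination t 0 * hsum - x 0 * ht 0 + t 0 * t 1 * x 1 * ht 2
    · show x 1 + t 0 * t 1 * x 0 + t 0 * t 1 * (t 2 * t 0 * x 2) = 3 * (t 1 / 3)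
      linear_combination t 1 * hsum - x 1 * ht 1 + t 1 * t 2 * x 2 * ht 0
    · show x 2 + t 1 * t 2 * x 1 + t 1 * t 2 * (t 0 * t 1 * x 0) = 3 * (t 2 / 3)
      linear_combination t 2 * hsum - x 2 * ht 2 + t 0 * t 2 * x 0 * ht 1
  rw [hdec x, hdec (cyc t ht x), hdec (cyc t ht (cyc t ht x)), hdec (fun i => t i / 3)]
  have hlin : A.linear x + A.linear (cyc t ht x) + A.linear (cyc t ht (cyc t ht x))
      = 3 * A.linear (fun i => t i / 3) := by
    rw [← map_add, ← map_add, hxsum, _root_.map_smul]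
    simp
  linarith

lemma faceT_setIntegral {t : Fin 3 → ℝ} (ht : ∀ i, t i * t i = 1)
    (hfin : μH[2] (faceT t) ≠ ⊤) (A : (Fin 3 → ℝ) →ᵃ[ℝ] ℝ) :
    ∫ x in faceT t, A x ∂(μH[2] : Measure (Fin 3 → ℝ))
      = (μH[2] (faceT t)).toReal * A (fun i => t i / 3) := by
  set μ : Measure (Fin 3 → ℝ) := μH[2] with hμ
  have hms : MeasurableSet (faceT t) := (isClosed_faceT t).measurableSet
  have hcomp := isCompact_faceT ht
  have hAc : Continuous A := A.continuous_of_finiteDimensional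
  have hUc : Continuous (cyc t ht) := (cyc t ht).continuous
  have hmp := (cyc t ht).measurePreserving_hausdorffMeasure 2
  have hemb := (cyc t ht).toHomeomorph.measurableEmbedding
  have key : ∀ g : (Fin 3 → ℝ) → ℝ,
      ∫ x in faceT t, g (cyc t ht x) ∂μ = ∫ x in faceT t, g x ∂μ := by
    intro g
    have := hmp.setIntegral_preimage_emb hemb g (faceT t)
    rwa [cyc_preimage_faceT] at this
  have i1 : IntegrableOn (fun x => A x) (faceT t) μ :=
    integrableOn_hausdorff_of_continuous hms hcomp hfin hAc
  have i2 : IntegrableOn (fun x => A (cyc t ht x)) (faceT t) μ :=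
    integrableOn_hausdorff_of_continuous hms hcomp hfin (hAc.comp hUc)
  have i3 : IntegrableOn (fun x => A (cyc t ht (cyc t ht x))) (faceT t) μ :=
    integrableOn_hausdorff_of_continuous hms hcomp hfin ((hAc.comp hUc).comp hUc)
  have hsplit : ∫ x in faceT t, (A x + A (cyc t ht x) + A (cyc t ht (cyc t ht x))) ∂μ
      = (∫ x in faceT t, A x ∂μ) + (∫ x in faceT t, A (cyc t ht x) ∂μ)
        + ∫ x in faceT t, A (cyc t ht (cyc t ht x)) ∂μ := by
    have h12 : IntegrableOn (fun x => A x + A (cyc t ht x)) (faceT t) μ := i1.add i2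
    rw [integral_add h12 i3, integral_add i1 i2]
  have hconst : ∫ x in faceT t, (A x + A (cyc t ht x) + A (cyc t ht (cyc t ht x))) ∂μ
      = ∫ _x in faceT t, (3 * A (fun i => t i / 3)) ∂μ :=
    setIntegral_congr_fun hms (fun x hx => cyc_sum_apply t ht A hx)
  have h2 : ∫ x in faceT t, A (cyc t ht x) ∂μ = ∫ x in faceT t, A x ∂μ := key _
  have h3 : ∫ x in faceT t, A (cyc t ht (cyc t ht x)) ∂μ
      = ∫ x in faceT t, A x ∂μ := by
    have := key (fun y => A (cyc t ht y))
    rw [this, h2]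
  have hcv : ∫ _x in faceT t, (3 * A (fun i => t i / 3)) ∂μ
      = (μ (faceT t)).toReal * (3 * A (fun i => t i / 3)) := by
    rw [setIntegral_const, smul_eq_mul, Measure.real_def]
  rw [hconst, h2, h3, hcv] at hsplit
  linarith

/-! ## The triangle in the plane -/

def tri2 (t0 t1 : ℝ) : Set (Fin 2 → ℝ) :=
  {y | 0 ≤ t0 * y 0 ∧ 0 ≤ t1 * y 1 ∧ t0 * y 0 + t1 * y 1 ≤ 1}

lemma isClosed_tri2 (t0 t1 : ℝ) : IsClosed (tri2 t0 t1) := by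
  have c0 : Continuous fun y : Fin 2 → ℝ => t0 * y 0 :=
    continuous_const.mul (continuous_apply 0)
  have c1 : Continuous fun y : Fin 2 → ℝ => t1 * y 1 :=
    continuous_const.mul (continuous_apply 1)
  exact IsClosed.inter (isClosed_le continuous_const c0)
    (IsClosed.inter (isClosed_le continuous_const c1)
      (isClosed_le (c0.add c1) continuous_const))

lemma tri2_subset_ball {t0 t1 : ℝ} (ht0 : t0 * t0 = 1) (ht1 : t1 * t1 = 1) :
    tri2 t0 t1 ⊆ Metric.closedBall 0 1 := by
  rintro y ⟨h0, h1, h2⟩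
  rw [mem_closedBall_zero_iff, pi_norm_le_iff_of_nonneg zero_le_one]
  intro i
  rw [Real.norm_eq_abs]
  fin_cases i
  · show |y 0| ≤ 1
    rw [abs_eq_of_sign ht0 h0]; linarith
  · show |y 1| ≤ 1
    rw [abs_eq_of_sign ht1 h1]; linarith

lemma isCompact_tri2 {t0 t1 : ℝ} (ht0 : t0 * t0 = 1) (ht1 : t1 * t1 = 1) :
    IsCompact (tri2 t0 t1) :=
  Metric.isCompact_of_isClosed_isBounded (isClosed_tri2 t0 t1)
    (Metric.isBounded_closedBall.subset (tri2_subset_ball ht0 ht1))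

lemma volume_tri2_ne_top {t0 t1 : ℝ} (ht0 : t0 * t0 = 1) (ht1 : t1 * t1 = 1) :
    volume (tri2 t0 t1) ≠ ⊤ :=
  ((isCompact_tri2 ht0 ht1).measure_lt_top).ne

lemma volume_tri2_pos {t0 t1 : ℝ} (ht0 : t0 * t0 = 1) (ht1 : t1 * t1 = 1) :
    0 < volume (tri2 t0 t1) := by
  classical
  set ivl : ℝ → Set ℝ := fun t => Ioo (min 0 (t / 4)) (max 0 (t / 4)) with hivl
  have hmem : ∀ t y, t * t = 1 → y ∈ ivl t → 0 ≤ t * y ∧ t * y < 1 / 4 := by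
    intro t y ht hy
    rcases mul_self_eq_one_iff.1 ht with rfl | rfl
    · simp only [hivl, mem_Ioo] at hy
      rw [min_eq_left (by norm_num), max_eq_right (by norm_num)] at hy
      constructor <;> [linarith [hy.1]; linarith [hy.2]]
    · simp only [hivl, mem_Ioo] at hy
      rw [min_eq_right (by norm_num), max_eq_left (by norm_num)] at hy
      constructor <;> [nlinarith [hy.2]; nlinarith [hy.1]]
  have hsub : (Set.pi univ fun i : Fin 2 => ivl (![t0, t1] i)) ⊆ tri2 t0 t1 := by
    intro y hy
    have h0 := hmem t0 (y 0) ht0 (hy 0 (mem_univ 0))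
    have h1 := hmem t1 (y 1) ht1 (hy 1 (mem_univ 1))
    exact ⟨h0.1, h1.1, by linarith [h0.2, h1.2]⟩
  have hvol : volume (Set.pi univ fun i : Fin 2 => ivl (![t0, t1] i)) > 0 := by
    rw [volume_pi_pi]
    rw [Fin.prod_univ_two]
    have hone : ∀ t : ℝ, t * t = 1 → volume (ivl t) = ENNReal.ofReal (1 / 4) := by
      intro t ht
      rcases mul_self_eq_one_iff.1 ht with rfl | rfl
      · rw [hivl]; rw [Real.volume_Ioo]; norm_num
      · rw [hivl]; rw [Real.volume_Ioo]; norm_num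
    rw [show (![t0, t1] 0) = t0 from rfl, show (![t0, t1] 1) = t1 from rfl,
      hone t0 ht0, hone t1 ht1]
    rw [← ENNReal.ofReal_mul (by norm_num)]
    norm_num
  exact lt_of_lt_of_le hvol (measure_mono hsub)

/-- the `3`-cycle of the plane triangle, as a homeomorphism. -/
def cyc2 (t0 t1 : ℝ) : (Fin 2 → ℝ) → (Fin 2 → ℝ) :=
  fun x => ![t0 - x 0 - t0 * t1 * x 1, t0 * t1 * x 0]

lemma continuous_cyc2 (t0 t1 : ℝ) : Continuous (cyc2 t0 t1) := by
  apply continuous_pi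
  intro i
  fin_cases i <;> simp [cyc2] <;> fun_prop

def cyc2inv (t0 t1 : ℝ) : (Fin 2 → ℝ) → (Fin 2 → ℝ) :=
  fun y => ![t0 * t1 * y 1, t0 * t1 * (t0 - t0 * t1 * y 1 - y 0)]

lemma continuous_cyc2inv (t0 t1 : ℝ) : Continuous (cyc2inv t0 t1) := by
  apply continuous_pi
  intro i
  fin_cases i <;> simp [cyc2inv] <;> fun_prop

def cyc2h (t0 t1 : ℝ) (ht0 : t0 * t0 = 1) (ht1 : t1 * t1 = 1) :
    (Fin 2 → ℝ) ≃ₜ (Fin 2 → ℝ) where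
  toFun := cyc2 t0 t1
  invFun := cyc2inv t0 t1
  left_inv := by
    intro x
    funext i
    fin_cases i
    · show t0 * t1 * (t0 * t1 * x 0) = x 0
      linear_combination (x 0 * (t0 * t0)) * ht1 + x 0 * ht0
    · show t0 * t1 * (t0 - t0 * t1 * (t0 * t1 * x 0) - (t0 - x 0 - t0 * t1 * x 1)) = x 1
      linear_combination ((x 1 - t0 * t1 * x 0) * (t0 * t0)) * ht1 + (x 1 - t0 * t1 * x 0) * ht0
  right_inv := by
    intro y
    funext i
    fin_cases i
    · show t0 - t0 * t1 * y 1 - t0 * t1 * (t0 * t1 * (t0 - t0 * t1 * y 1 - y 0)) = y 0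
      linear_combination (-(t0 - t0 * t1 * y 1 - y 0) * (t0 * t0)) * ht1 +
        (-(t0 - t0 * t1 * y 1 - y 0)) * ht0
    · show t0 * t1 * (t0 * t1 * y 1) = y 1
      linear_combination (y 1 * (t0 * t0)) * ht1 + y 1 * ht0
  continuous_toFun := continuous_cyc2 t0 t1
  continuous_invFun := continuous_cyc2inv t0 t1

lemma measurePreserving_cyc2 (t0 t1 : ℝ) (ht0 : t0 * t0 = 1) (ht1 : t1 * t1 = 1) :
    MeasurePreserving (cyc2 t0 t1) (volume : Measure (Fin 2 → ℝ)) volume := by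
  set M : (Fin 2 → ℝ) →ₗ[ℝ] (Fin 2 → ℝ) :=
    Matrix.toLin' !![(-1 : ℝ), -(t0 * t1); t0 * t1, 0] with hM
  have hdet : LinearMap.det M = 1 := by
    rw [hM, LinearMap.det_toLin']
    rw [Matrix.det_fin_two]
    simp
    linear_combination (t1 * t1) * ht0 + ht1
  have hMapply : ∀ x, M x = ![-(x 0) - t0 * t1 * x 1, t0 * t1 * x 0] := by
    intro x
    rw [hM]
    rw [Matrix.toLin'_apply]
    funext i
    fin_cases i <;>
      simp [Matrix.mulVec, dotProduct, Fin.sum_univ_two] <;> ring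
  have mpM : MeasurePreserving M volume volume := by
    refine ⟨M.continuous_of_finiteDimensional.measurable, ?_⟩
    rw [Measure.map_linearMap_addHaar_eq_smul_addHaar volume (by rw [hdet]; norm_num)]
    rw [hdet]
    norm_num
  have comp := (measurePreserving_add_left (volume : Measure (Fin 2 → ℝ))
    ![t0, 0]).comp mpM
  have : cyc2 t0 t1 = (fun x => ![t0, (0:ℝ)] + x) ∘ M := by
    funext x
    rw [Function.comp_apply, hMapply]
    funext i
    fin_cases i <;> simp [cyc2] <;> ring
  rw [this]
  exact comp

lemma cyc2_preimage_tri2 {t0 t1 : ℝ} (ht0 : t0 * t0 = 1) (ht1 : t1 * t1 = 1) :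
    (cyc2 t0 t1) ⁻¹' (tri2 t0 t1) = tri2 t0 t1 := by
  ext x
  have c0 : cyc2 t0 t1 x 0 = t0 - x 0 - t0 * t1 * x 1 := rfl
  have c1 : cyc2 t0 t1 x 1 = t0 * t1 * x 0 := rfl
  simp only [mem_preimage, tri2, mem_setOf_eq, c0, c1]
  have e0 : t0 * (t0 - x 0 - t0 * t1 * x 1) = 1 - t0 * x 0 - t1 * x 1 := by
    linear_combination (1 - t1 * x 1) * ht0
  have e1 : t1 * (t0 * t1 * x 0) = t0 * x 0 := by
    linear_combination (t0 * x 0) * ht1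
  rw [e0, e1]
  constructor
  · rintro ⟨a, b, c⟩; exact ⟨b, by linarith, by linarith⟩
  · rintro ⟨a, b, c⟩; exact ⟨by linarith, a, by linarith⟩

lemma cyc2_sum (t0 t1 : ℝ) (ht0 : t0 * t0 = 1) (ht1 : t1 * t1 = 1) (x : Fin 2 → ℝ) :
    x + cyc2 t0 t1 x + cyc2 t0 t1 (cyc2 t0 t1 x) = (3:ℝ) • ![t0 / 3, t1 / 3] := by
  funext i
  simp only [Pi.add_apply, Pi.smul_apply, smul_eq_mul]
  fin_cases i
  · show x 0 + (t0 - x 0 - t0 * t1 * x 1) +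
      (t0 - (t0 - x 0 - t0 * t1 * x 1) - t0 * t1 * (t0 * t1 * x 0)) = 3 * (t0 / 3)
    linear_combination (-(x 0) * (t0 * t0)) * ht1 + (-(x 0)) * ht0
  · show x 1 + t0 * t1 * x 0 + t0 * t1 * (t0 - x 0 - t0 * t1 * x 1) = 3 * (t1 / 3)
    linear_combination ((t1 - x 1) * 1) * ht0 + (-(x 1) * (t0 * t0)) * ht1 + (-(x 1)) * 0 * ht0

lemma tri2_setIntegral {t0 t1 : ℝ} (ht0 : t0 * t0 = 1) (ht1 : t1 * t1 = 1)
    (A : (Fin 2 → ℝ) →ᵃ[ℝ] ℝ) :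
    ∫ y in tri2 t0 t1, A y = (volume (tri2 t0 t1)).toReal * A ![t0 / 3, t1 / 3] := by
  have hms : MeasurableSet (tri2 t0 t1) := (isClosed_tri2 t0 t1).measurableSet
  have hcomp := isCompact_tri2 ht0 ht1
  have hAc : Continuous A := A.continuous_of_finiteDimensional
  have hUc : Continuous (cyc2 t0 t1) := continuous_cyc2 t0 t1
  have hmp := measurePreserving_cyc2 t0 t1 ht0 ht1
  have hemb : MeasurableEmbedding (cyc2 t0 t1) :=
    (cyc2h t0 t1 ht0 ht1).measurableEmbedding
  have key : ∀ g : (Fin 2 → ℝ) → ℝ,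
      ∫ x in tri2 t0 t1, g (cyc2 t0 t1 x) = ∫ x in tri2 t0 t1, g x := by
    intro g
    have := hmp.setIntegral_preimage_emb hemb g (tri2 t0 t1)
    rwa [cyc2_preimage_tri2 ht0 ht1] at this
  have i1 : IntegrableOn (fun x => A x) (tri2 t0 t1) volume :=
    hAc.continuousOn.integrableOn_compact hcomp
  have i2 : IntegrableOn (fun x => A (cyc2 t0 t1 x)) (tri2 t0 t1) volume :=
    (hAc.comp hUc).continuousOn.integrableOn_compact hcomp
  have i3 : IntegrableOn (fun x => A (cyc2 t0 t1 (cyc2 t0 t1 x))) (tri2 t0 t1) volume :=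
    ((hAc.comp hUc).comp hUc).continuousOn.integrableOn_compact hcomp
  have hsplit : ∫ x in tri2 t0 t1, (A x + A (cyc2 t0 t1 x) + A (cyc2 t0 t1 (cyc2 t0 t1 x)))
      = (∫ x in tri2 t0 t1, A x) + (∫ x in tri2 t0 t1, A (cyc2 t0 t1 x))
        + ∫ x in tri2 t0 t1, A (cyc2 t0 t1 (cyc2 t0 t1 x)) := by
    have h12 : IntegrableOn (fun x => A x + A (cyc2 t0 t1 x)) (tri2 t0 t1) volume :=
      i1.add i2
    rw [integral_add h12 i3, integral_add i1 i2]
  have hptwise : ∀ x, A x + A (cyc2 t0 t1 x) + A (cyc2 t0 t1 (cyc2 t0 t1 x))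
      = 3 * A ![t0 / 3, t1 / 3] := by
    intro x
    have hdec : ∀ z : Fin 2 → ℝ, A z = A.linear z + A 0 := by
      intro z
      conv_lhs => rw [A.decomp]
      simp
    rw [hdec x, hdec (cyc2 t0 t1 x), hdec (cyc2 t0 t1 (cyc2 t0 t1 x)), hdec ![t0/3, t1/3]]
    have hlin : A.linear x + A.linear (cyc2 t0 t1 x) + A.linear (cyc2 t0 t1 (cyc2 t0 t1 x))
        = 3 * A.linear ![t0 / 3, t1 / 3] := by
      rw [← map_add, ← map_add, cyc2_sum t0 t1 ht0 ht1, _root_.map_smul]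
      simp
    linarith
  have hconst : ∫ x in tri2 t0 t1, (A x + A (cyc2 t0 t1 x) + A (cyc2 t0 t1 (cyc2 t0 t1 x)))
      = ∫ _x in tri2 t0 t1, (3 * A ![t0 / 3, t1 / 3]) :=
    setIntegral_congr_fun hms (fun x _ => hptwise x)
  have h2 : ∫ x in tri2 t0 t1, A (cyc2 t0 t1 x) = ∫ x in tri2 t0 t1, A x := key _
  have h3 : ∫ x in tri2 t0 t1, A (cyc2 t0 t1 (cyc2 t0 t1 x)) = ∫ x in tri2 t0 t1, A x := by
    have := key (fun y => A (cyc2 t0 t1 y))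
    rw [this, h2]
  have hcv : ∫ _x in tri2 t0 t1, (3 * A ![t0 / 3, t1 / 3])
      = (volume (tri2 t0 t1)).toReal * (3 * A ![t0 / 3, t1 / 3]) := by
    rw [setIntegral_const, smul_eq_mul, Measure.real_def]
  rw [hconst, h2, h3, hcv] at hsplit
  linarith

/-! ## Embedding the plane into space -/

def emb2 : (Fin 2 → ℝ) → (Fin 3 → ℝ) := fun y => ![y 0, y 1, 0]

lemma emb2_apply_zero (y : Fin 2 → ℝ) : emb2 y 0 = y 0 := rfl
lemma emb2_apply_one (y : Fin 2 → ℝ) : emb2 y 1 = y 1 := rfl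
lemma emb2_apply_two (y : Fin 2 → ℝ) : emb2 y 2 = 0 := rfl

lemma isometry_emb2 : Isometry emb2 := by
  apply Isometry.of_dist_eq
  intro x y
  apply le_antisymm
  · apply (dist_pi_le_iff dist_nonneg).2
    intro i
    fin_cases i
    · show dist (x 0) (y 0) ≤ dist x y
      exact dist_le_pi_dist x y 0
    · show dist (x 1) (y 1) ≤ dist x y
      exact dist_le_pi_dist x y 1
    · show dist (0:ℝ) 0 ≤ dist x y
      simp [dist_nonneg]
  · apply (dist_pi_le_iff dist_nonneg).2
    intro i
    fin_cases i
    · calc dist (x 0) (y 0) = dist (emb2 x 0) (emb2 y 0) := rfl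
        _ ≤ dist (emb2 x) (emb2 y) := dist_le_pi_dist _ _ 0
    · calc dist (x 1) (y 1) = dist (emb2 x 1) (emb2 y 1) := rfl
        _ ≤ dist (emb2 x) (emb2 y) := dist_le_pi_dist _ _ 1

lemma measurableEmbedding_emb2 : MeasurableEmbedding emb2 :=
  (isometry_emb2.isClosedEmbedding).measurableEmbedding

lemma volume_eq_hausdorff2 : (volume : Measure (Fin 2 → ℝ)) = μH[2] := by
  have := (hausdorffMeasure_pi_real (ι := Fin 2)).symm
  simpa using this

lemma map_emb2 : Measure.map emb2 (volume : Measure (Fin 2 → ℝ))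
    = (μH[2] : Measure (Fin 3 → ℝ)).restrict (range emb2) := by
  rw [volume_eq_hausdorff2]
  exact isometry_emb2.map_hausdorffMeasure (Or.inl (by norm_num))

/-- description of the interior face (triangle) in the plane `x 2 = 0`. -/
def face0 (t0 t1 : ℝ) : Set (Fin 3 → ℝ) :=
  {x | (0 ≤ t0 * x 0 ∧ 0 ≤ t1 * x 1 ∧ t0 * x 0 + t1 * x 1 ≤ 1) ∧ x 2 = 0}

lemma emb2_preimage_face0 (t0 t1 : ℝ) : emb2 ⁻¹' (face0 t0 t1) = tri2 t0 t1 := by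
  ext y
  simp only [mem_preimage, face0, tri2, mem_setOf_eq,
    emb2_apply_zero, emb2_apply_one, emb2_apply_two]
  tauto

lemma face0_subset_range (t0 t1 : ℝ) : face0 t0 t1 ⊆ range emb2 := by
  rintro x ⟨-, h2⟩
  refine ⟨![x 0, x 1], ?_⟩
  funext i
  fin_cases i
  · rfl
  · rfl
  · show (0:ℝ) = x 2
    exact h2.symm

lemma emb2_image_tri2 (t0 t1 : ℝ) : emb2 '' (tri2 t0 t1) = face0 t0 t1 := by
  rw [← emb2_preimage_face0, image_preimage_eq_inter_range,
    inter_eq_self_of_subset_left (face0_subset_range t0 t1)]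

lemma isClosed_face0 (t0 t1 : ℝ) : IsClosed (face0 t0 t1) := by
  have c0 : Continuous fun x : Fin 3 → ℝ => t0 * x 0 :=
    continuous_const.mul (continuous_apply 0)
  have c1 : Continuous fun x : Fin 3 → ℝ => t1 * x 1 :=
    continuous_const.mul (continuous_apply 1)
  exact IsClosed.inter
    (IsClosed.inter (isClosed_le continuous_const c0)
      (IsClosed.inter (isClosed_le continuous_const c1)
        (isClosed_le (c0.add c1) continuous_const)))
    (isClosed_eq (continuous_apply 2) continuous_const)

lemma hausdorff_face0 (t0 t1 : ℝ) :
    (μH[2] : Measure (Fin 3 → ℝ)) (face0 t0 t1) = volume (tri2 t0 t1) := by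
  rw [← emb2_image_tri2, isometry_emb2.hausdorffMeasure_image (Or.inl (by norm_num)),
    volume_eq_hausdorff2]

lemma face0_setIntegral_fun (t0 t1 : ℝ) (f : (Fin 3 → ℝ) → ℝ) :
    ∫ x in face0 t0 t1, f x ∂(μH[2] : Measure (Fin 3 → ℝ))
      = ∫ y in tri2 t0 t1, f (emb2 y) := by
  have hms : MeasurableSet (face0 t0 t1) := (isClosed_face0 t0 t1).measurableSet
  have mp : MeasurePreserving emb2 (volume : Measure (Fin 2 → ℝ))
      ((μH[2] : Measure (Fin 3 → ℝ)).restrict (range emb2)) :=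
    ⟨isometry_emb2.continuous.measurable, map_emb2⟩
  have h := mp.setIntegral_preimage_emb measurableEmbedding_emb2 f (face0 t0 t1)
  rw [emb2_preimage_face0] at h
  have hmeq : ((μH[2] : Measure (Fin 3 → ℝ)).restrict (range emb2)).restrict (face0 t0 t1)
      = (μH[2] : Measure (Fin 3 → ℝ)).restrict (face0 t0 t1) := by
    rw [Measure.restrict_restrict hms,
      inter_eq_self_of_subset_left (face0_subset_range t0 t1)]
  rw [h, hmeq]

/-- the linear embedding as an affine map, for composing with affine integrands. -/
def emb2L : (Fin 2 → ℝ) →ₗ[ℝ] (Fin 3 → ℝ) where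
  toFun := emb2
  map_add' := by
    intro x y
    funext i
    fin_cases i
    · show x 0 + y 0 = x 0 + y 0
      rfl
    · show x 1 + y 1 = x 1 + y 1
      rfl
    · show (0:ℝ) = 0 + 0
      norm_num
  map_smul' := by
    intro c x
    funext i
    fin_cases i
    · show c * x 0 = c * x 0
      rfl
    · show c * x 1 = c * x 1
      rfl
    · show (0:ℝ) = c * 0
      norm_num

lemma face0_setIntegral {t0 t1 : ℝ} (ht0 : t0 * t0 = 1) (ht1 : t1 * t1 = 1)
    (A : (Fin 3 → ℝ) →ᵃ[ℝ] ℝ) :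
    ∫ x in face0 t0 t1, A x ∂(μH[2] : Measure (Fin 3 → ℝ))
      = ((μH[2] : Measure (Fin 3 → ℝ)) (face0 t0 t1)).toReal * A ![t0 / 3, t1 / 3, 0] := by
  rw [face0_setIntegral_fun, hausdorff_face0]
  have h := tri2_setIntegral ht0 ht1 (A.comp emb2L.toAffineMap)
  have h1 : ∀ y, (A.comp emb2L.toAffineMap) y = A (emb2 y) := fun y => rfl
  have hv : emb2 ![t0 / 3, t1 / 3] = ![t0 / 3, t1 / 3, 0] := by
    funext i
    fin_cases i <;> rfl
  have h2 : (A.comp emb2L.toAffineMap) ![t0 / 3, t1 / 3] = A ![t0 / 3, t1 / 3, 0] := by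
    rw [h1, hv]
  rw [← h2, ← h]
  rfl

open NNReal ENNReal

/-! ## Measure bounds for the boundary faces -/

def qmap (t : Fin 3 → ℝ) : (Fin 3 → ℝ) → (Fin 3 → ℝ) :=
  fun z => ![z 0, z 1, t 2 * (1 - t 0 * z 0 - t 1 * z 1)]

def pmap : (Fin 3 → ℝ) → (Fin 3 → ℝ) := fun x => ![x 0, x 1, 0]

lemma lipschitz_qmap {t : Fin 3 → ℝ} (ht : ∀ i, t i * t i = 1) :
    LipschitzWith 3 (qmap t) := by
  have habs : ∀ i, |t i| = 1 := fun i => abs_one_of_sq (ht i)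
  apply LipschitzWith.of_dist_le_mul
  intro x y
  have hd : (0:ℝ) ≤ dist x y := dist_nonneg
  have hco : ((3 : ℝ≥0) : ℝ) = 3 := by norm_num
  rw [hco]
  apply (dist_pi_le_iff (by linarith)).2
  intro i
  have h0 := dist_le_pi_dist x y 0
  have h1 := dist_le_pi_dist x y 1
  fin_cases i
  · show dist (x 0) (y 0) ≤ 3 * dist x y
    linarith
  · show dist (x 1) (y 1) ≤ 3 * dist x y
    linarith
  · show dist (t 2 * (1 - t 0 * x 0 - t 1 * x 1)) (t 2 * (1 - t 0 * y 0 - t 1 * y 1))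
      ≤ 3 * dist x y
    rw [Real.dist_eq]
    have e : t 2 * (1 - t 0 * x 0 - t 1 * x 1) - t 2 * (1 - t 0 * y 0 - t 1 * y 1)
        = t 2 * t 0 * (y 0 - x 0) + t 2 * t 1 * (y 1 - x 1) := by ring
    rw [e]
    have hb0 : |t 2 * t 0 * (y 0 - x 0)| = |x 0 - y 0| := by
      rw [abs_mul, abs_mul, habs 2, habs 0, one_mul, one_mul, abs_sub_comm]
    have hb1 : |t 2 * t 1 * (y 1 - x 1)| = |x 1 - y 1| := by
      rw [abs_mul, abs_mul, habs 2, habs 1, one_mul, one_mul, abs_sub_comm]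
    calc |t 2 * t 0 * (y 0 - x 0) + t 2 * t 1 * (y 1 - x 1)|
        ≤ |t 2 * t 0 * (y 0 - x 0)| + |t 2 * t 1 * (y 1 - x 1)| := abs_add_le _ _
      _ = |x 0 - y 0| + |x 1 - y 1| := by rw [hb0, hb1]
      _ ≤ dist x y + dist x y := by
          rw [← Real.dist_eq, ← Real.dist_eq]; exact add_le_add h0 h1
      _ ≤ 3 * dist x y := by linarith

lemma lipschitz_pmap : LipschitzWith 1 pmap := by
  apply LipschitzWith.of_dist_le_mul
  intro x y
  have hd : (0:ℝ) ≤ dist x y := dist_nonneg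
  have hco : ((1 : ℝ≥0) : ℝ) = 1 := by norm_num
  rw [hco, one_mul]
  apply (dist_pi_le_iff hd).2
  intro i
  fin_cases i
  · show dist (x 0) (y 0) ≤ dist x y
    exact dist_le_pi_dist x y 0
  · show dist (x 1) (y 1) ≤ dist x y
    exact dist_le_pi_dist x y 1
  · show dist (0:ℝ) 0 ≤ dist x y
    simp [hd]

lemma qmap_image {t : Fin 3 → ℝ} (ht : ∀ i, t i * t i = 1) :
    qmap t '' face0 (t 0) (t 1) = faceT t := by
  ext x
  constructor
  · rintro ⟨z, ⟨⟨hz0, hz1, hz2⟩, -⟩, rfl⟩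
    rw [mem_faceT_iff]
    have c0 : qmap t z 0 = z 0 := rfl
    have c1 : qmap t z 1 = z 1 := rfl
    have c2 : qmap t z 2 = t 2 * (1 - t 0 * z 0 - t 1 * z 1) := rfl
    rw [c0, c1, c2]
    have e : t 2 * (t 2 * (1 - t 0 * z 0 - t 1 * z 1)) = 1 - t 0 * z 0 - t 1 * z 1 := by
      linear_combination (1 - t 0 * z 0 - t 1 * z 1) * ht 2
    exact ⟨⟨hz0, hz1, by rw [e]; linarith⟩, by rw [e]; ring⟩
  · intro hx
    rw [mem_faceT_iff] at hx
    obtain ⟨⟨h0, h1, h2⟩, hsum⟩ := hx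
    refine ⟨![x 0, x 1, 0], ⟨⟨?_, ?_, ?_⟩, rfl⟩, ?_⟩
    · show 0 ≤ t 0 * x 0; exact h0
    · show 0 ≤ t 1 * x 1; exact h1
    · show t 0 * x 0 + t 1 * x 1 ≤ 1; linarith
    · funext i
      fin_cases i
      · rfl
      · rfl
      · show t 2 * (1 - t 0 * x 0 - t 1 * x 1) = x 2
        linear_combination (-(t 2)) * hsum + x 2 * ht 2

lemma pmap_image {t : Fin 3 → ℝ} (ht : ∀ i, t i * t i = 1) :
    pmap '' faceT t = face0 (t 0) (t 1) := by
  ext z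
  constructor
  · rintro ⟨x, hx, rfl⟩
    rw [mem_faceT_iff] at hx
    obtain ⟨⟨h0, h1, h2⟩, hsum⟩ := hx
    refine ⟨⟨?_, ?_, ?_⟩, rfl⟩
    · show 0 ≤ t 0 * x 0; exact h0
    · show 0 ≤ t 1 * x 1; exact h1
    · show t 0 * x 0 + t 1 * x 1 ≤ 1; linarith
  · intro hz
    refine ⟨qmap t z, ?_, ?_⟩
    · rw [← qmap_image ht]; exact mem_image_of_mem _ hz
    · obtain ⟨⟨-, -, -⟩, hz2⟩ := hz
      funext i
      fin_cases i
      · rfl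
      · rfl
      · show (0:ℝ) = z 2
        exact hz2.symm

lemma hausdorff_faceT_ne_top {t : Fin 3 → ℝ} (ht : ∀ i, t i * t i = 1) :
    (μH[2] : Measure (Fin 3 → ℝ)) (faceT t) ≠ ⊤ := by
  rw [← qmap_image ht]
  have hle := (lipschitz_qmap ht).hausdorffMeasure_image_le
    (by norm_num : (0:ℝ) ≤ 2) (face0 (t 0) (t 1))
  refine ne_top_of_le_ne_top ?_ hle
  rw [hausdorff_face0]
  exact ENNReal.mul_ne_top
    (ENNReal.rpow_ne_top_of_nonneg (by norm_num) ENNReal.coe_ne_top)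
    (volume_tri2_ne_top (ht 0) (ht 1))

lemma hausdorff_faceT_ne_zero {t : Fin 3 → ℝ} (ht : ∀ i, t i * t i = 1) :
    (μH[2] : Measure (Fin 3 → ℝ)) (faceT t) ≠ 0 := by
  have hle := lipschitz_pmap.hausdorffMeasure_image_le
    (by norm_num : (0:ℝ) ≤ 2) (faceT t)
  rw [pmap_image ht] at hle
  have h1 : ((1 : ℝ≥0) : ℝ≥0∞) ^ (2:ℝ) = 1 := by
    rw [ENNReal.coe_one, ENNReal.one_rpow]
  rw [h1, one_mul, hausdorff_face0] at hle
  intro h0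
  rw [h0] at hle
  exact absurd (le_antisymm hle zero_le) (volume_tri2_pos (ht 0) (ht 1)).ne'

lemma hausdorff_faceT_toReal_pos {t : Fin 3 → ℝ} (ht : ∀ i, t i * t i = 1) :
    0 < ((μH[2] : Measure (Fin 3 → ℝ)) (faceT t)).toReal :=
  ENNReal.toReal_pos (hausdorff_faceT_ne_zero ht) (hausdorff_faceT_ne_top ht)

lemma volume_tri2_toReal_pos {t0 t1 : ℝ} (ht0 : t0 * t0 = 1) (ht1 : t1 * t1 = 1) :
    0 < (volume (tri2 t0 t1)).toReal :=
  ENNReal.toReal_pos (volume_tri2_pos ht0 ht1).ne' (volume_tri2_ne_top ht0 ht1)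

/-! ## The two tetrahedra over a checkerboard face -/

lemma octT_inter_pair (b : Bool) :
    octT ![b, b, true] ∩ octT ![b, b, false] = face0 (sgnB b) (sgnB b) := by
  rw [octT_eq, octT_eq]
  ext x
  have e0t : sgnB ((![b, b, true] : Fin 3 → Bool) 0) = sgnB b := rfl
  have e1t : sgnB ((![b, b, true] : Fin 3 → Bool) 1) = sgnB b := rfl
  have e2t : sgnB ((![b, b, true] : Fin 3 → Bool) 2) = 1 := rfl
  have e0f : sgnB ((![b, b, false] : Fin 3 → Bool) 0) = sgnB b := rfl
  have e1f : sgnB ((![b, b, false] : Fin 3 → Bool) 1) = sgnB b := rfl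
  have e2f : sgnB ((![b, b, false] : Fin 3 → Bool) 2) = -1 := rfl
  simp only [mem_inter_iff, tet, mem_setOf_eq, face0, Fin.sum_univ_three,
    e0t, e1t, e2t, e0f, e1f, e2f]
  constructor
  · rintro ⟨⟨hp, hps⟩, ⟨hm, hms⟩⟩
    have h2p := hp 2
    have h2m := hm 2
    rw [e2t] at h2p
    rw [e2f] at h2m
    have hx2 : x 2 = 0 := by linarith
    have h0 := hp 0
    have h1 := hp 1
    rw [e0t] at h0
    rw [e1t] at h1
    exact ⟨⟨h0, h1, by linarith⟩, hx2⟩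
  · rintro ⟨⟨h0, h1, hs⟩, hx2⟩
    constructor
    · refine ⟨fun i => ?_, by rw [hx2]; linarith⟩
      fin_cases i
      · exact h0
      · exact h1
      · show 0 ≤ sgnB ((![b, b, true] : Fin 3 → Bool) 2) * x 2
        rw [e2t, hx2]; norm_num
    · refine ⟨fun i => ?_, by rw [hx2]; linarith⟩
      fin_cases i
      · exact h0
      · exact h1
      · show 0 ≤ sgnB ((![b, b, false] : Fin 3 → Bool) 2) * x 2
        rw [e2f, hx2]; norm_num

/-! ## The conforming components -/

lemma conf_linear {L : (Fin 3 → Bool) → ((Fin 3 → ℝ) →ᵃ[ℝ] ℝ)}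
    (hc : ∀ σ τ, Set.EqOn (L σ) (L τ) (octT σ ∩ octT τ))
    (hb : ∀ σ, ∀ x ∈ octT σ ∩ frontier octΩ, L σ x = 0)
    (j : Fin 3) (σ : Fin 3 → Bool) :
    (L σ).linear (Pi.single j 1) = -(sgnB (σ j)) * (L (fun _ => true) 0) := by
  have h0 : L σ 0 = L (fun _ => true) 0 :=
    hc σ (fun _ => true) ⟨zero_mem_octT σ, zero_mem_octT _⟩
  have hv : L σ (sgnB (σ j) • (Pi.single j 1 : Fin 3 → ℝ)) = 0 :=
    hb σ _ (vertex_mem_face σ j)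
  have hdec : ∀ z : Fin 3 → ℝ, L σ z = (L σ).linear z + L σ 0 := by
    intro z
    conv_lhs => rw [(L σ).decomp]
    simp
  rw [hdec, _root_.map_smul, smul_eq_mul, h0] at hv
  have hsq := sgnB_sq (σ j)
  set s := sgnB (σ j)
  set a := (L σ).linear (Pi.single j 1)
  set c := L (fun _ => true) 0
  have h1 : s * a = -c := by linarith
  calc a = (s * s) * a := by rw [hsq]; ring
    _ = s * (s * a) := by ring
    _ = s * (-c) := by rw [h1]
    _ = -s * c := by ring

/-! ## All tetrahedra have the same volume -/

lemma volume_octT_eq (σ : Fin 3 → Bool) :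
    volume (octT σ) = volume (octT (fun _ => true)) := by
  set N : (Fin 3 → ℝ) →ₗ[ℝ] (Fin 3 → ℝ) :=
    Matrix.toLin' (Matrix.diagonal fun i => sgnB (σ i)) with hN
  have hNapply : ∀ (x : Fin 3 → ℝ) (i : Fin 3), N x i = sgnB (σ i) * x i := by
    intro x i
    rw [hN, Matrix.toLin'_apply, Matrix.mulVec_diagonal]
  have hdet : |LinearMap.det N| = 1 := by
    rw [hN, LinearMap.det_toLin', Matrix.det_diagonal, Finset.abs_prod]
    rw [Finset.prod_congr rfl fun i _ => sgnB_abs (σ i)]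
    simp
  have hdet0 : LinearMap.det N ≠ 0 := by
    intro h
    rw [h] at hdet
    norm_num at hdet
  have hpre : N ⁻¹' (octT (fun _ => true)) = octT σ := by
    rw [octT_eq, octT_eq]
    ext x
    simp only [mem_preimage, tet, mem_setOf_eq]
    have hone : sgnB true = 1 := rfl
    constructor
    · rintro ⟨h0, h1⟩
      refine ⟨fun i => ?_, ?_⟩
      · have := h0 i
        rw [hone, one_mul, hNapply] at this
        exact this
      · calc ∑ i, sgnB (σ i) * x i = ∑ i, sgnB true * N x i := by
              refine Finset.sum_congr rfl fun i _ => ?_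
              rw [hone, one_mul, hNapply]
          _ ≤ 1 := h1
    · rintro ⟨h0, h1⟩
      refine ⟨fun i => ?_, ?_⟩
      · rw [hone, one_mul, hNapply]
        exact h0 i
      · calc ∑ i, sgnB true * N x i = ∑ i, sgnB (σ i) * x i := by
              refine Finset.sum_congr rfl fun i _ => ?_
              rw [hone, one_mul, hNapply]
          _ ≤ 1 := h1
  rw [← hpre, Measure.addHaar_preimage_linearMap volume hdet0]
  rw [abs_inv, hdet]
  norm_num

lemma isCompact_face0 {t0 t1 : ℝ} (ht0 : t0 * t0 = 1) (ht1 : t1 * t1 = 1) :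
    IsCompact (face0 t0 t1) := by
  apply Metric.isCompact_of_isClosed_isBounded (isClosed_face0 t0 t1)
  apply Bornology.IsBounded.subset
    (Metric.isBounded_closedBall (x := (0 : Fin 3 → ℝ)) (r := 1))
  rintro x ⟨⟨h0, h1, h2⟩, hx2⟩
  rw [mem_closedBall_zero_iff, pi_norm_le_iff_of_nonneg zero_le_one]
  intro i
  rw [Real.norm_eq_abs]
  fin_cases i
  · show |x 0| ≤ 1
    rw [abs_eq_of_sign ht0 h0]; linarith
  · show |x 1| ≤ 1
    rw [abs_eq_of_sign ht1 h1]; linarith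
  · show |x 2| ≤ 1
    rw [hx2]; norm_num

lemma hausdorff_face0_ne_top {t0 t1 : ℝ} (ht0 : t0 * t0 = 1) (ht1 : t1 * t1 = 1) :
    (μH[2] : Measure (Fin 3 → ℝ)) (face0 t0 t1) ≠ ⊤ := by
  rw [hausdorff_face0]
  exact volume_tri2_ne_top ht0 ht1

lemma affine_sub_eq (A : (Fin 3 → ℝ) →ᵃ[ℝ] ℝ) (c d v : Fin 3 → ℝ) (k : ℝ)
    (h : c - d = k • v) : A c - A d = k * A.linear v := by
  have hdec : ∀ z : Fin 3 → ℝ, A z = A.linear z + A 0 := by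
    intro z
    conv_lhs => rw [A.decomp]
    simp
  rw [hdec c, hdec d]
  have hl : A.linear c - A.linear d = A.linear (c - d) := (map_sub _ _ _).symm
  rw [h, _root_.map_smul, smul_eq_mul] at hl
  linarith

lemma pair_sum {L3 : (Fin 3 → Bool) → ((Fin 3 → ℝ) →ᵃ[ℝ] ℝ)}
    (hj3 : ∀ σ τ, σ ≠ τ →
      ∫ x in octT σ ∩ octT τ, (L3 σ x - L3 τ x) ∂(μH[2]) = 0)
    (hb3 : ∀ σ, ∫ x in octT σ ∩ frontier octΩ, L3 σ x ∂(μH[2]) = 0) (b : Bool) :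
    (L3 ![b, b, true]).linear (Pi.single 2 1)
      + (L3 ![b, b, false]).linear (Pi.single 2 1) = 0 := by
  have hsq : sgnB b * sgnB b = 1 := sgnB_sq b
  have htp1 : ∀ i, sgnB ((![b, b, true] : Fin 3 → Bool) i)
      * sgnB ((![b, b, true] : Fin 3 → Bool) i) = 1 := fun i => sgnB_sq _
  have htm1 : ∀ i, sgnB ((![b, b, false] : Fin 3 → Bool) i)
      * sgnB ((![b, b, false] : Fin 3 → Bool) i) = 1 := fun i => sgnB_sq _
  -- values at the outer face centroids vanish
  have hvp : L3 ![b, b, true] (fun i => sgnB ((![b, b, true] : Fin 3 → Bool) i) / 3) = 0 := by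
    have h := hb3 ![b, b, true]
    rw [octT_inter_frontier, faceT_setIntegral htp1 (hausdorff_faceT_ne_top htp1)] at h
    rcases mul_eq_zero.1 h with h' | h'
    · exact absurd h' (hausdorff_faceT_toReal_pos htp1).ne'
    · exact h'
  have hvm : L3 ![b, b, false] (fun i => sgnB ((![b, b, false] : Fin 3 → Bool) i) / 3) = 0 := by
    have h := hb3 ![b, b, false]
    rw [octT_inter_frontier, faceT_setIntegral htm1 (hausdorff_faceT_ne_top htm1)] at h
    rcases mul_eq_zero.1 h with h' | h'
    · exact absurd h' (hausdorff_faceT_toReal_pos htm1).ne'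
    · exact h'
  -- matching means across the interior face
  have hne : (![b, b, true] : Fin 3 → Bool) ≠ ![b, b, false] := by
    intro hcontra
    have h2 := congrFun hcontra 2
    simp at h2
  have hj := hj3 ![b, b, true] ![b, b, false] hne
  rw [octT_inter_pair b] at hj
  have hmsf : MeasurableSet (face0 (sgnB b) (sgnB b)) :=
    (isClosed_face0 _ _).measurableSet
  have ip : IntegrableOn (fun x => L3 ![b, b, true] x) (face0 (sgnB b) (sgnB b)) μH[2] :=
    integrableOn_hausdorff_of_continuous hmsf (isCompact_face0 hsq hsq)
      (hausdorff_face0_ne_top hsq hsq)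
      (L3 ![b, b, true]).continuous_of_finiteDimensional
  have im : IntegrableOn (fun x => L3 ![b, b, false] x) (face0 (sgnB b) (sgnB b)) μH[2] :=
    integrableOn_hausdorff_of_continuous hmsf (isCompact_face0 hsq hsq)
      (hausdorff_face0_ne_top hsq hsq)
      (L3 ![b, b, false]).continuous_of_finiteDimensional
  rw [integral_sub ip im, face0_setIntegral hsq hsq, face0_setIntegral hsq hsq] at hj
  have hpos : 0 < ((μH[2] : Measure (Fin 3 → ℝ)) (face0 (sgnB b) (sgnB b))).toReal := by
    rw [hausdorff_face0]
    exact volume_tri2_toReal_pos hsq hsq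
  have hc0 : L3 ![b, b, true] ![sgnB b / 3, sgnB b / 3, 0]
      = L3 ![b, b, false] ![sgnB b / 3, sgnB b / 3, 0] := by
    have := mul_left_cancel₀ hpos.ne' (by linarith [hj] :
      ((μH[2] : Measure (Fin 3 → ℝ)) (face0 (sgnB b) (sgnB b))).toReal
          * L3 ![b, b, true] ![sgnB b / 3, sgnB b / 3, 0]
        = ((μH[2] : Measure (Fin 3 → ℝ)) (face0 (sgnB b) (sgnB b))).toReal
          * L3 ![b, b, false] ![sgnB b / 3, sgnB b / 3, 0])
    exact this
  -- relate centroid values to the linear parts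
  have hdiffp : (fun i => sgnB ((![b, b, true] : Fin 3 → Bool) i) / 3)
      - ![sgnB b / 3, sgnB b / 3, 0] = (1/3 : ℝ) • (Pi.single 2 1 : Fin 3 → ℝ) := by
    funext i
    fin_cases i
    · show sgnB b / 3 - sgnB b / 3 = (1/3 : ℝ) * (Pi.single 2 1 : Fin 3 → ℝ) 0
      rw [Pi.single_eq_of_ne (by decide)]
      ring
    · show sgnB b / 3 - sgnB b / 3 = (1/3 : ℝ) * (Pi.single 2 1 : Fin 3 → ℝ) 1
      rw [Pi.single_eq_of_ne (by decide)]
      ring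
    · show sgnB true / 3 - 0 = (1/3 : ℝ) * (Pi.single 2 1 : Fin 3 → ℝ) 2
      rw [Pi.single_eq_same]
      show (1:ℝ) / 3 - 0 = 1/3 * 1
      ring
  have hdiffm : (fun i => sgnB ((![b, b, false] : Fin 3 → Bool) i) / 3)
      - ![sgnB b / 3, sgnB b / 3, 0] = (-(1/3) : ℝ) • (Pi.single 2 1 : Fin 3 → ℝ) := by
    funext i
    fin_cases i
    · show sgnB b / 3 - sgnB b / 3 = (-(1/3) : ℝ) * (Pi.single 2 1 : Fin 3 → ℝ) 0
      rw [Pi.single_eq_of_ne (by decide)]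
      ring
    · show sgnB b / 3 - sgnB b / 3 = (-(1/3) : ℝ) * (Pi.single 2 1 : Fin 3 → ℝ) 1
      rw [Pi.single_eq_of_ne (by decide)]
      ring
    · show sgnB false / 3 - 0 = (-(1/3) : ℝ) * (Pi.single 2 1 : Fin 3 → ℝ) 2
      rw [Pi.single_eq_same]
      show (-1:ℝ) / 3 - 0 = -(1/3) * 1
      ring
  have hp := affine_sub_eq (L3 ![b, b, true]) _ _ _ _ hdiffp
  have hm := affine_sub_eq (L3 ![b, b, false]) _ _ _ _ hdiffm
  rw [hvp] at hp
  rw [hvm] at hm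
  linarith [hp, hm, hc0]

def octEquiv : Bool × Bool × Bool ≃ (Fin 3 → Bool) where
  toFun p := ![p.1, p.2.1, p.2.2]
  invFun f := (f 0, f 1, f 2)
  left_inv := by rintro ⟨a, b, c⟩; rfl
  right_inv := by
    intro f
    funext i
    fin_cases i <;> rfl

lemma octEquiv_apply (p : Bool × Bool × Bool) : octEquiv p = ![p.1, p.2.1, p.2.2] := rfl


/-- For every admissible discrete velocity `v_h = (v₁, v₂, v₃)` (first two
components continuous piecewise affine vanishing on `∂Ω`, third component
piecewise affine with matching integral means across interior faces and
vanishing integral means on boundary faces), the pressure `q` with `q = 1` on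
`T_{11ℓ}, T_{22ℓ}` and `q = 0` otherwise satisfies `∫_Ω q div_h v_h dx = 0`. -/
theorem octahedron_checkerboard_orthogonal
    (L1 L2 L3 : (Fin 3 → Bool) → ((Fin 3 → ℝ) →ᵃ[ℝ] ℝ))
    (hc1 : ∀ σ τ, Set.EqOn (L1 σ) (L1 τ) (octT σ ∩ octT τ))
    (hb1 : ∀ σ, ∀ x ∈ octT σ ∩ frontier octΩ, L1 σ x = 0)
    (hc2 : ∀ σ τ, Set.EqOn (L2 σ) (L2 τ) (octT σ ∩ octT τ))
    (hb2 : ∀ σ, ∀ x ∈ octT σ ∩ frontier octΩ, L2 σ x = 0)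
    (hj3 : ∀ σ τ, σ ≠ τ →
      ∫ x in octT σ ∩ octT τ, (L3 σ x - L3 τ x) ∂(μH[2]) = 0)
    (hb3 : ∀ σ, ∫ x in octT σ ∩ frontier octΩ, L3 σ x ∂(μH[2]) = 0) :
    ∑ σ : Fin 3 → Bool, (if σ 0 = σ 1 then (1 : ℝ) else 0) *
      ((volume (octT σ)).toReal *
        ((L1 σ).linear (Pi.single 0 1) + (L2 σ).linear (Pi.single 1 1)
          + (L3 σ).linear (Pi.single 2 1))) = 0 := by
  set V : ℝ := (volume (octT (fun _ => true))).toReal with hV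
  set c1 : ℝ := L1 (fun _ => true) 0 with hc1'
  set c2 : ℝ := L2 (fun _ => true) 0 with hc2'
  have hvol : ∀ σ, (volume (octT σ)).toReal = V :=
    fun σ => by rw [hV, volume_octT_eq σ]
  have hL1 : ∀ σ, (L1 σ).linear (Pi.single 0 1) = -(sgnB (σ 0)) * c1 :=
    conf_linear hc1 hb1 0
  have hL2 : ∀ σ, (L2 σ).linear (Pi.single 1 1) = -(sgnB (σ 1)) * c2 :=
    conf_linear hc2 hb2 1
  have hp1 := pair_sum hj3 hb3 true
  have hp2 := pair_sum hj3 hb3 false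
  rw [← Equiv.sum_comp octEquiv]
  simp only [octEquiv_apply, Fintype.sum_prod_type, Fintype.sum_bool,
    Matrix.cons_val_zero, Matrix.cons_val_one, Matrix.head_cons]
  rw [hvol ![true, true, true], hvol ![true, true, false],
    hvol ![true, false, true], hvol ![true, false, false],
    hvol ![false, true, true], hvol ![false, true, false],
    hvol ![false, false, true], hvol ![false, false, false]]
  rw [hL1 ![true, true, true], hL1 ![true, true, false],
    hL1 ![true, false, true], hL1 ![true, false, false],
    hL1 ![false, true, true], hL1 ![false, true, false],
    hL1 ![false, false, true], hL1 ![false, false, false]]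
  rw [hL2 ![true, true, true], hL2 ![true, true, false],
    hL2 ![true, false, true], hL2 ![true, false, false],
    hL2 ![false, true, true], hL2 ![false, true, false],
    hL2 ![false, false, true], hL2 ![false, false, false]]
  simp only [Matrix.cons_val_zero, Matrix.cons_val_one, Matrix.head_cons, sgnB,
    if_true, Bool.false_eq_true, Bool.true_eq_false, if_false]
  linear_combination V * hp1 + V * hp2

end
end

section
/- Consider the four tetrahedra T̂₁ = conv{0, e₁, e₂, e₃}, T̂₂ = conv{0, e₁, −e₂, e₃}, T̂₃ = conv{0, e₁, −e₂, −e₃}, T̂₄ = conv{0, e₁, e₂, −e₃}, and for a ∈ ℝ define the piecewise vector field φ by φ|_{T̂₁}(x) = (0, a − 3a x₃, −a + 3a x₂), φ|_{T̂₂}(x) = (0, −a + 3a x₃, −a − 3a x₂), φ|_{T̂₃}(x) = (0, −a − 3a x₃, a + 3a x₂), φ|_{T̂₄}(x) = (0, a + 3a x₃, a − 3a x₂). Then on each tetrahedron ε(φ) = 0, φ is continuous at the barycenters of the interior faces (the faces containing the edge conv{0, e₁}), and φ vanishes at the barycenters of all boundary faces. -/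
/-!
Each piece of `φ` has the form `x ↦ c + t (e₁ × x)`, an infinitesimal rotation about the
`e₁`-axis. Its gradient, `t` times the matrix of `e₁ × ·`, is skew-symmetric, so its
symmetric gradient vanishes.
The constants `c` and `t = ±3a` are tuned so that the pieces agree at the barycenters of the
faces through the edge `conv{0, e₁}` and vanish at those of the boundary faces, which is a
direct evaluation.
-/

/-- A vector field has vanishing symmetric gradient
`ε(v) = (Dv + Dvᵀ)/2 = 0` everywhere. -/
def SymGradZero (v : (Fin 3 → ℝ) → Fin 3 → ℝ) : Prop :=
  ∀ (x : Fin 3 → ℝ) (i j : Fin 3),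
    fderiv ℝ (fun y => v y i) x (Pi.single j 1)
      + fderiv ℝ (fun y => v y j) x (Pi.single i 1) = 0

open Matrix

theorem fderiv_const_add_mulVec_apply_single {ι : Type*} [Fintype ι] [DecidableEq ι]
    (c : ι → ℝ) (A : Matrix ι ι ℝ) (x : ι → ℝ) (i j : ι) :
    fderiv ℝ (fun y => (c + A *ᵥ y) i) x (Pi.single j 1) = A i j := by
  let L : (ι → ℝ) →L[ℝ] ℝ :=
    (ContinuousLinearMap.proj i).comp (LinearMap.toContinuousLinearMap (toLin' A))
  have hL : HasFDerivAt (fun y => (c + A *ᵥ y) i) L x :=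
    (L.hasFDerivAt.const_add (c i)).congr_of_eventuallyEq (.of_forall fun _ => rfl)
  rw [hL.fderiv]
  simp [L]

theorem symGradZero_const_add_mulVec {A : Matrix (Fin 3) (Fin 3) ℝ} (hA : Aᵀ = -A)
    (c : Fin 3 → ℝ) : SymGradZero fun x => c + A *ᵥ x := by
  intro x i j
  rw [fderiv_const_add_mulVec_apply_single, fderiv_const_add_mulVec_apply_single,
    ← transpose_apply A j i, hA, neg_apply, neg_add_cancel]

def rotationGeneratorE₁ : Matrix (Fin 3) (Fin 3) ℝ := !![0, 0, 0; 0, 0, -1; 0, 1, 0]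

theorem transpose_rotationGeneratorE₁ : rotationGeneratorE₁ᵀ = -rotationGeneratorE₁ := by
  ext i j; fin_cases i <;> fin_cases j <;> simp [rotationGeneratorE₁]

theorem rotationGeneratorE₁_mulVec (x : Fin 3 → ℝ) :
    rotationGeneratorE₁ *ᵥ x = ![0, -x 2, x 1] := by
  ext i; fin_cases i <;> simp [rotationGeneratorE₁, mulVec, dotProduct, Fin.sum_univ_three]

theorem symGradZero_of_eq_rotationE₁ {v : (Fin 3 → ℝ) → Fin 3 → ℝ} (b c t : ℝ)
    (hv : ∀ x, v x = ![0, b - t * x 2, c + t * x 1]) : SymGradZero v := by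
  have hskew : (t • rotationGeneratorE₁)ᵀ = -(t • rotationGeneratorE₁) := by
    rw [transpose_smul, transpose_rotationGeneratorE₁, smul_neg]
  convert symGradZero_const_add_mulVec hskew ![0, b, c] using 1
  funext x
  rw [hv, smul_mulVec, rotationGeneratorE₁_mulVec]
  ext i; fin_cases i <;> simp [sub_eq_add_neg]

/-- The four affine pieces of the piecewise rigid body motion `φ` on the
tetrahedra `T̂₁, …, T̂₄` each have vanishing symmetric gradient, `φ` is
continuous at the barycenters of the four interior faces, and `φ` vanishes at
the barycenters of all boundary faces. -/
theorem piecewise_rigid_motion_counterexample (a : ℝ)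
    (φ₁ φ₂ φ₃ φ₄ : (Fin 3 → ℝ) → Fin 3 → ℝ)
    (h₁ : ∀ x, φ₁ x = ![0, a - 3 * a * x 2, -a + 3 * a * x 1])
    (h₂ : ∀ x, φ₂ x = ![0, -a + 3 * a * x 2, -a - 3 * a * x 1])
    (h₃ : ∀ x, φ₃ x = ![0, -a - 3 * a * x 2, a + 3 * a * x 1])
    (h₄ : ∀ x, φ₄ x = ![0, a + 3 * a * x 2, a - 3 * a * x 1]) :
    (SymGradZero φ₁ ∧ SymGradZero φ₂ ∧ SymGradZero φ₃ ∧ SymGradZero φ₄) ∧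
    -- continuity at barycenters of the four interior faces
    (φ₁ ![1/3, 0, 1/3] = φ₂ ![1/3, 0, 1/3] ∧
     φ₂ ![1/3, -1/3, 0] = φ₃ ![1/3, -1/3, 0] ∧
     φ₃ ![1/3, 0, -1/3] = φ₄ ![1/3, 0, -1/3] ∧
     φ₄ ![1/3, 1/3, 0] = φ₁ ![1/3, 1/3, 0]) ∧
    -- vanishing at barycenters of the boundary faces
    (φ₁ ![1/3, 1/3, 1/3] = 0 ∧ φ₁ ![0, 1/3, 1/3] = 0 ∧
     φ₂ ![1/3, -1/3, 1/3] = 0 ∧ φ₂ ![0, -1/3, 1/3] = 0 ∧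
     φ₃ ![1/3, -1/3, -1/3] = 0 ∧ φ₃ ![0, -1/3, -1/3] = 0 ∧
     φ₄ ![1/3, 1/3, -1/3] = 0 ∧ φ₄ ![0, 1/3, -1/3] = 0) := by
  refine ⟨⟨?_, ?_, ?_, ?_⟩, ?_, ?_⟩
  · exact symGradZero_of_eq_rotationE₁ a (-a) (3 * a) h₁
  · exact symGradZero_of_eq_rotationE₁ (-a) (-a) (-(3 * a)) fun x => by
      simp only [h₂, neg_mul, sub_neg_eq_add, ← sub_eq_add_neg]
  · exact symGradZero_of_eq_rotationE₁ (-a) a (3 * a) h₃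
  · exact symGradZero_of_eq_rotationE₁ a a (-(3 * a)) fun x => by
      simp only [h₄, neg_mul, sub_neg_eq_add, ← sub_eq_add_neg]
  all_goals
    simp [h₁, h₂, h₃, h₄]
    constructorm* _ ∧ _ <;> ring
end
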